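/- Let λ ∈ ℂ and n ≥ 1, and let F be the companion matrix of (x−λ)^n. With respect to the involution of complex conjugation, F is a *cosquare (i.e., F = A^{−*}A for some nonsingular complex A) if and only if |λ| = 1. -/

import Mathlib

open Matrix Polynomial

/-- The companion matrix of a monic polynomial `q = xⁿ + c₁xⁿ⁻¹ + ⋯ + cₙ`, as an
`n × n` matrix: `1`'s on the first subdiagonal, last column `(-cₙ, …, -c₁)ᵀ`,
and all other entries `0`. -/
def companionMatrix (n : ℕ) (q : Polynomial ℂ) : Matrix (Fin n) (Fin n) ℂ :=
  Matrix.of fun i j =>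
    if (j : ℕ) = n - 1 then -q.coeff i
    else if (i : ℕ) = (j : ℕ) + 1 then 1 else 0

/-!
If `F = A⁻* A`, then `det F = λⁿ` equals `det A / conj (det A)`, which has modulus `1`.

Conversely, let `|λ| = 1`. Sequences `m ↦ p(m) λ^m` with `deg p < n` satisfy the linear recurrence
with characteristic polynomial `(x - λ)ⁿ` (the `n`-th forward difference of `p` vanishes), and since
`conj λ = λ⁻¹` this class is stable under `c ↦ (m ↦ conj (c (-m)))`. For such a `c`, the companion
matrix `F` acts on the Toeplitz matrix `S = (c (j - i))` as a shift from both sides, giving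
`F* S F = S`; taking `p(x) = (x - 1)(x - 2)⋯(x - n + 1)` makes `S` lower triangular with nonzero
diagonal. Finally, any `F` preserving a nonsingular form `S` is a *cosquare: `A = t S + conj t S* F`
satisfies `A* F = A`, and `t` on the unit circle can be chosen with `A` nonsingular, because
`det (t² S + S* F)` is a nonzero polynomial in `t`.
-/

open Finset

theorem sum_coeff_X_sub_C_pow_mul_eval_mul_zpow {K : Type*} [Field K] {p : K[X]} {n : ℕ}
    (hp : p.natDegree < n) {lam : K} (hlam : lam ≠ 0) (m : ℤ) :
    ∑ l ∈ range (n + 1), ((X - C lam) ^ n).coeff l * (p.eval ((m + l : ℤ) : K) * lam ^ (m + l)) =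
      0 := by
  have hΔ := congrFun (fwdDiff_iter_eq_zero_of_degree_lt hp) (m : K)
  rw [fwdDiff_iter_eq_sum_shift, Pi.zero_apply] at hΔ
  calc _ = lam ^ (m + n) * ∑ l ∈ range (n + 1),
        ((-1 : ℤ) ^ (n - l) * n.choose l) • p.eval ((m : K) + l • (1 : K)) := by
        rw [mul_sum]
        refine sum_congr rfl fun l hl => ?_
        have hl : l ≤ n := Nat.lt_succ_iff.mp (mem_range.mp hl)
        have hpow : lam ^ (m + n) = lam ^ (n - l) * lam ^ (m + l) := by
          rw [← zpow_natCast, Nat.cast_sub hl, ← zpow_add₀ hlam]; ring_nf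
        rw [sub_eq_add_neg, ← map_neg, coeff_X_add_C_pow, zsmul_eq_mul, nsmul_one, neg_pow, hpow]
        push_cast
        ring
    _ = 0 := by rw [hΔ, mul_zero]

theorem star_eval_mul_zpow (p : ℂ[X]) {lam : ℂ} (hlam : ‖lam‖ = 1) (m : ℤ) :
    star (p.eval (m : ℂ) * lam ^ m) =
      ((p.map (starRingEnd ℂ)).comp (-X)).eval ((-m : ℤ) : ℂ) * lam ^ (-m) := by
  rw [star_mul', star_zpow₀, Complex.star_def, ← Complex.inv_eq_conj hlam, _root_.inv_zpow',
    eval_comp, ← eval_map_apply, map_intCast]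
  simp

theorem det_companionMatrix {n : ℕ} (hn : n ≠ 0) (q : ℂ[X]) :
    (companionMatrix n q).det = (-1) ^ n * q.coeff 0 := by
  obtain ⟨m, rfl⟩ := Nat.exists_eq_add_one_of_ne_zero hn
  set F' := (companionMatrix (m + 1) q).submatrix (finRotate (m + 1)) id
  have hrot : ∀ i : Fin (m + 1),
      (finRotate (m + 1) i : ℕ) = if (i : ℕ) = m then 0 else (i : ℕ) + 1 := by
    intro i
    simp only [coe_finRotate, Fin.ext_iff, Fin.val_last]
  have htri : F'.IsUpperTriangular := by
    intro i j (hji : j < i)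
    have := i.isLt
    rw [Fin.lt_def] at hji
    simp only [F', submatrix_apply, id, companionMatrix, of_apply, hrot]
    split_ifs <;> first | rfl | contradiction | omega
  have hdiag : ∏ i, F' i i = -q.coeff 0 := by
    rw [Fin.prod_univ_castSucc, prod_eq_one]
    · simp [F', companionMatrix]
    · intro i _
      simp [F', companionMatrix, i.isLt.ne]
  have h := det_permute (finRotate (m + 1)) (companionMatrix (m + 1) q)
  rw [det_of_isUpperTriangular htri, hdiag, sign_finRotate, Nat.add_sub_cancel] at h
  push_cast at h
  have hsq : ((-1 : ℂ) ^ m) ^ 2 = 1 := by rw [← pow_mul, mul_comm, pow_mul]; simp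
  linear_combination (-(-1 : ℂ) ^ m) * h - (companionMatrix (m + 1) q).det * hsq

theorem vecMul_companionMatrix {n : ℕ} {q : ℂ[X]} (hq : q.coeff n = 1) {s : ℕ → ℂ}
    (hs : ∑ l ∈ range (n + 1), q.coeff l * s l = 0) (j : Fin n) :
    ((fun i : Fin n => s i) ᵥ* companionMatrix n q) j = s (j + 1) := by
  simp only [vecMul, dotProduct, companionMatrix, of_apply]
  split_ifs with hj
  · rw [sum_range_succ, hq, one_mul, add_eq_zero_iff_neg_eq'] at hs
    have hjn : (j : ℕ) + 1 = n := by have := j.isLt; omega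
    rw [hjn, ← neg_eq_iff_eq_neg.mpr hs.symm, ← sum_neg_distrib, ← Fin.sum_univ_eq_sum_range]
    exact sum_congr rfl fun i _ => by ring
  · have hj1 : (j : ℕ) + 1 < n := by have := j.isLt; omega
    simp_rw [mul_ite, mul_one, mul_zero]
    rw [Fintype.sum_eq_single ⟨j + 1, hj1⟩ fun i hi => if_neg fun h => hi (Fin.ext h), if_pos rfl]

def Matrix.toeplitz {K : Type*} (n : ℕ) (c : ℤ → K) : Matrix (Fin n) (Fin n) K :=
  of fun i j => c ((j : ℕ) - (i : ℕ))

theorem toeplitz_mul_companionMatrix {n : ℕ} {q : ℂ[X]} (hq : q.coeff n = 1) {c : ℤ → ℂ}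
    (hc : ∀ m : ℤ, ∑ l ∈ range (n + 1), q.coeff l * c (m + l) = 0) :
    toeplitz n c * companionMatrix n q = toeplitz n fun m => c (m + 1) := by
  ext i j
  have hs : ∑ l ∈ range (n + 1), q.coeff l * c ((l : ℕ) - (i : ℕ)) = 0 := by
    simpa only [neg_add_eq_sub] using hc (-(i : ℕ))
  rw [mul_apply_eq_vecMul]
  convert vecMul_companionMatrix hq hs j using 2
  · rfl
  rw [toeplitz, of_apply]
  push_cast
  ring_nf

theorem conjTranspose_companionMatrix_mul_toeplitz {n : ℕ} {q : ℂ[X]} (hq : q.coeff n = 1)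
    {c : ℤ → ℂ} (hc : ∀ m : ℤ, ∑ l ∈ range (n + 1), q.coeff l * star (c (m - l)) = 0) :
    (companionMatrix n q)ᴴ * (toeplitz n fun m => c (m + 1)) = toeplitz n c := by
  ext i j
  rw [← conjTranspose_conjTranspose (_ * _), conjTranspose_mul, conjTranspose_conjTranspose,
    conjTranspose_apply, mul_apply_eq_vecMul]
  convert congrArg star (vecMul_companionMatrix hq (hc ((j : ℕ) + 1)) i) using 1
  · congr 3
    ext k
    rw [conjTranspose_apply, toeplitz, of_apply]
    ring_nf
  rw [star_star, toeplitz, of_apply]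
  congr 1
  push_cast
  ring

theorem isUnit_det_toeplitz {K : Type*} [Field K] {n : ℕ} {c : ℤ → K}
    (hc : ∀ m : ℕ, 0 < m → m < n → c m = 0) (h0 : c 0 ≠ 0) : IsUnit (toeplitz n c).det := by
  have htri : (toeplitz n c).IsLowerTriangular := by
    intro i j (hij : i < j)
    have := j.isLt
    rw [toeplitz, of_apply, ← Nat.cast_sub hij.le]
    exact hc _ (Nat.sub_pos_of_lt hij) (by omega)
  rw [det_of_isLowerTriangular _ htri, isUnit_iff_ne_zero]
  exact prod_ne_zero_iff.mpr fun i _ => by simpa [toeplitz] using h0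

theorem exists_isUnit_det_conjTranspose_companionMatrix_mul_mul_self {lam : ℂ}
    (hlam : ‖lam‖ = 1) {n : ℕ} (hn : n ≠ 0) :
    ∃ S : Matrix (Fin n) (Fin n) ℂ, IsUnit S.det ∧
      (companionMatrix n ((X - C lam) ^ n))ᴴ * S * companionMatrix n ((X - C lam) ^ n) = S := by
  have hlam0 : lam ≠ 0 := norm_ne_zero_iff.mp (by rw [hlam]; exact one_ne_zero)
  have hq : ((X - C lam) ^ n).coeff n = 1 := by
    simpa using ((monic_X_sub_C lam).pow n).coeff_natDegree
  set p : ℂ[X] := (descPochhammer ℂ (n - 1)).comp (X - C 1)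
  have hp : p.natDegree < n := by
    rw [natDegree_comp, descPochhammer_natDegree, natDegree_X_sub_C, mul_one]; omega
  have hp_star : ((p.map (starRingEnd ℂ)).comp (-X)).natDegree < n := by
    rwa [natDegree_comp, natDegree_map, natDegree_neg, natDegree_X, mul_one]
  set c : ℤ → ℂ := fun m => p.eval (m : ℂ) * lam ^ m
  have hSF := toeplitz_mul_companionMatrix hq (c := c)
    (sum_coeff_X_sub_C_pow_mul_eval_mul_zpow hp hlam0)
  have hFSF := conjTranspose_companionMatrix_mul_toeplitz hq (c := c) fun m => by
    simp only [c, star_eval_mul_zpow p hlam, neg_sub]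
    simpa only [neg_add_eq_sub] using sum_coeff_X_sub_C_pow_mul_eval_mul_zpow hp_star hlam0 (-m)
  refine ⟨_, isUnit_det_toeplitz (c := c) ?_ ?_, by rw [Matrix.mul_assoc, hSF, hFSF]⟩
  · intro m hm hmn
    have hm1 : (X - C 1 : ℂ[X]).eval ((m : ℤ) : ℂ) = ((m - 1 : ℕ) : ℂ) := by
      simp [Nat.cast_sub (Nat.one_le_of_lt hm)]
    simp only [c, p, eval_comp, hm1, descPochhammer_eval_coe_nat_of_lt (by omega : m - 1 < n - 1),
      zero_mul]
  · simp only [c, p, eval_comp, eval_sub, eval_X, eval_C, Int.cast_zero, zero_sub, zpow_zero,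
      mul_one, descPochhammer_eval_eq_prod_range]
    exact prod_ne_zero_iff.mpr fun j _ => by
      rw [← neg_add', neg_ne_zero, add_comm]; exact Nat.cast_add_one_ne_zero j

def Matrix.IsStarCosquare {K ι : Type*} [Field K] [StarRing K] [Fintype ι] [DecidableEq ι]
    (M : Matrix ι ι K) : Prop :=
  ∃ A : Matrix ι ι K, IsUnit A.det ∧ M = (Aᴴ)⁻¹ * A

theorem Matrix.IsStarCosquare.norm_det_eq_one {𝕜 ι : Type*} [RCLike 𝕜] [Fintype ι]
    [DecidableEq ι] {M : Matrix ι ι 𝕜} (hM : M.IsStarCosquare) : ‖M.det‖ = 1 := by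
  obtain ⟨A, hA, rfl⟩ := hM
  have hA0 : ‖A.det‖ ≠ 0 := norm_ne_zero_iff.mpr hA.ne_zero
  rw [det_mul, det_nonsing_inv, det_conjTranspose, Ring.inverse_eq_inv', norm_mul, norm_inv,
    norm_star, inv_mul_cancel₀ hA0]

theorem finite_setOf_det_sq_smul_add_eq_zero {K ι : Type*} [Field K] [Fintype ι] [DecidableEq ι]
    {S : Matrix ι ι K} (hS : IsUnit S.det) (T : Matrix ι ι K) :
    {t : K | (t ^ 2 • S + T).det = 0}.Finite := by
  set p := (-(S⁻¹ * T)).charpoly.comp (X ^ 2)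
  have hp : p ≠ 0 := ((charpoly_monic _).comp (monic_X_pow 2) (by simp)).ne_zero
  refine (finite_setOfPred_isRoot hp).subset fun t ht => ?_
  have hfac : t ^ 2 • S + T = S * (scalar ι (t ^ 2) - -(S⁻¹ * T)) := by
    rw [sub_neg_eq_add, mul_add, ← mul_assoc, mul_nonsing_inv _ hS, one_mul, scalar_apply,
      ← smul_one_eq_diagonal, Matrix.mul_smul, Matrix.mul_one]
  rw [Set.mem_ofPred_eq, hfac, det_mul, ← eval_charpoly] at ht
  simpa [p, IsRoot, eval_comp, hS.ne_zero] using ht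

theorem Complex.infinite_sphere_zero_one : (Metric.sphere (0 : ℂ) 1).Infinite :=
  (isPreconnected_sphere (by simp [Complex.rank_real_complex]) 0 1).infinite_of_nontrivial
    ⟨1, by simp, -1, by simp, by norm_num⟩

theorem exists_isUnit_det_smul_add_star_smul {ι : Type*} [Fintype ι] [DecidableEq ι]
    {S : Matrix ι ι ℂ} (hS : IsUnit S.det) (T : Matrix ι ι ℂ) :
    ∃ t : ℂ, IsUnit (t • S + star t • T).det := by
  obtain ⟨t, ht, hdet⟩ :=
    (Complex.infinite_sphere_zero_one.sdiff (finite_setOf_det_sq_smul_add_eq_zero hS T)).nonempty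
  rw [mem_sphere_zero_iff_norm] at ht
  have ht0 : t ≠ 0 := norm_ne_zero_iff.mp (by rw [ht]; exact one_ne_zero)
  have hfac : t • S + star t • T = t⁻¹ • (t ^ 2 • S + T) := by
    rw [Complex.star_def, ← Complex.inv_eq_conj ht, smul_add, smul_smul, sq,
      inv_mul_cancel_left₀ ht0]
  refine ⟨t, isUnit_iff_ne_zero.mpr ?_⟩
  rw [hfac, det_smul]
  exact mul_ne_zero (pow_ne_zero _ (inv_ne_zero ht0)) hdet

theorem Matrix.isStarCosquare_of_conjTranspose_mul_mul_self {ι : Type*} [Fintype ι]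
    [DecidableEq ι] {F S : Matrix ι ι ℂ} (hS : IsUnit S.det) (hF : Fᴴ * S * F = S) :
    F.IsStarCosquare := by
  obtain ⟨t, hA⟩ := exists_isUnit_det_smul_add_star_smul hS (Sᴴ * F)
  set A := t • S + star t • (Sᴴ * F)
  have hAF : Aᴴ * F = A := by
    simp only [A, conjTranspose_add, conjTranspose_smul, conjTranspose_mul,
      conjTranspose_conjTranspose, star_star, add_mul, smul_mul, hF]
    exact add_comm _ _
  have hAH : IsUnit Aᴴ.det := by rw [det_conjTranspose]; exact hA.star
  exact ⟨A, hA, (nonsing_inv_mul_cancel_left _ _ hAH).symm.trans (congrArg _ hAF)⟩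

/-- Let `λ ∈ ℂ`, `n ≥ 1`, and let `F` be the companion matrix
of `(x - λ)ⁿ`.  With respect to complex conjugation, `F` is a *cosquare, i.e.
`F = (Aᴴ)⁻¹ A` for some nonsingular complex `A`, if and only if `|λ| = 1`. -/
theorem companion_is_star_cosquare_iff (lam : ℂ) (n : ℕ) (hn : 1 ≤ n) :
    (∃ A : Matrix (Fin n) (Fin n) ℂ, IsUnit A.det ∧
        companionMatrix n ((X - C lam) ^ n) = (Aᴴ)⁻¹ * A) ↔
      ‖lam‖ = 1 := by
  change (companionMatrix n ((X - C lam) ^ n)).IsStarCosquare ↔ _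
  have hn0 : n ≠ 0 := Nat.one_le_iff_ne_zero.mp hn
  constructor
  · intro hF
    have hdet : ‖lam‖ ^ n = 1 := by
      simpa [det_companionMatrix hn0, coeff_zero_eq_eval_zero] using hF.norm_det_eq_one
    exact (pow_eq_one_iff_of_nonneg (norm_nonneg lam) hn0).mp hdet
  · intro hlam
    obtain ⟨S, hS, hFSF⟩ := exists_isUnit_det_conjTranspose_companionMatrix_mul_mul_self hlam hn0
    exact isStarCosquare_of_conjTranspose_mul_mul_self hS hFSF
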